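/- Let Q be the concrete domain (ℚ, <, =, >) with the standard order and equality relations on the rational numbers. There is no ALCOSCC(Q) concept D containing no feature roles that is equivalent to the concept C_ex := succ( |child ∩ (salary < ↗salary)| > |child ∩ (salary < ↗salary)^c| ), where child is a role name and salary a feature name; that is, for every ALCOSCC(Q) concept D in which no successor restriction contains a feature role as a set variable, there exists a finitely branching interpretation I with D^I ≠ C_ex^I. -/

import Mathlib

namespace ALCOSCC

/-! ## Concrete domains and constraint systems -/

/-- A concrete domain: a relational structure over a relational signature. -/
structure ConcreteDomain where
  Dom : Type
  dom_nonempty : Nonempty Dom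
  Pred : Type
  arity : Pred → ℕ
  interp : (P : Pred) → (Fin (arity P) → Dom) → Prop

/-- A single constraint `P(v₁,…,v_k)` over variable type `V`. -/
structure Cstr (D : ConcreteDomain) (V : Type) where
  P : D.Pred
  args : Fin (D.arity P) → V

/-- A constraint system: a set of constraints. -/
abbrev CSys (D : ConcreteDomain) (V : Type) := Set (Cstr D V)

variable {D : ConcreteDomain} {V : Type}

def cstrHolds (h : V → D.Dom) (c : Cstr D V) : Prop := D.interp c.P (h ∘ c.args)

/-- Satisfiability of a constraint system. -/
def csysSat (S : CSys D V) : Prop := ∃ h : V → D.Dom, ∀ c ∈ S, cstrHolds h c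

/-- The variables occurring in a constraint system. -/
def csysVars (S : CSys D V) : Set V := { x | ∃ c ∈ S, ∃ i, c.args i = x }

/-- JEPD: for every arity `k` for which `D` has `k`-ary predicates, the interpretations
of the `k`-ary predicates partition `D^k` (i.e. every tuple satisfies exactly one of them). -/
def JEPD (D : ConcreteDomain) : Prop :=
  ∀ k : ℕ, (∃ P : D.Pred, D.arity P = k) →
    ∀ t : Fin k → D.Dom,
      ∃! P : D.Pred, ∃ h : D.arity P = k, D.interp P (fun i => t (Fin.cast h i))

/-- Quantifier-free, equality-free first-order formulas over the signature of `D`,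
with variables of type `V`. -/
inductive QFF (D : ConcreteDomain) (V : Type) : Type where
  | atom (P : D.Pred) (args : Fin (D.arity P) → V)
  | not (φ : QFF D V)
  | and (φ ψ : QFF D V)
  | or (φ ψ : QFF D V)

def QFF.Eval : QFF D V → (V → D.Dom) → Prop
  | .atom P args, h => D.interp P (h ∘ args)
  | .not φ, h => ¬ φ.Eval h
  | .and φ ψ, h => φ.Eval h ∧ ψ.Eval h
  | .or φ ψ, h => φ.Eval h ∨ ψ.Eval h

/-- JD: equality on `D` is definable by a quantifier-free, equality-free first-order
formula over the signature of `D` (with two variables, `false` ↦ first, `true` ↦ second). -/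
def JD (D : ConcreteDomain) : Prop :=
  ∃ φ : QFF D Bool, ∀ a b : D.Dom, φ.Eval (fun v => bif v then b else a) ↔ a = b

/-- AP (amalgamation): if two constraint systems contain exactly the same constraints
over the variables they share, their union is satisfiable iff both are. -/
def AP (D : ConcreteDomain) : Prop :=
  ∀ (V : Type) (B C : CSys D V),
    (∀ c : Cstr D V, (∀ i, c.args i ∈ csysVars B ∩ csysVars C) → (c ∈ B ↔ c ∈ C)) →
    (csysSat (B ∪ C) ↔ (csysSat B ∧ csysSat C))

/-- A patchwork concrete domain. -/
def Patchwork (D : ConcreteDomain) : Prop := JEPD D ∧ JD D ∧ AP D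

/-- Homomorphism ω-compactness: a countable constraint system is satisfiable whenever
all of its finite subsystems are. -/
def HomOmegaCompact (D : ConcreteDomain) : Prop :=
  ∀ (V : Type) (S : CSys D V), S.Countable →
    (∀ F : CSys D V, F ⊆ S → F.Finite → csysSat F) → csysSat S

/-! ## Syntax of ALCOSCC(D) -/

/-- A feature path: a feature name `f` or a role name followed by a feature name `r f`. -/
inductive Path : Type where
  | feat (f : ℕ)
  | rfeat (r f : ℕ)
deriving DecidableEq

/-- A feature pointer: `f` (value at the current individual) or `↗f` (value at the successor). -/
inductive FPtr : Type where
  | here (f : ℕ)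
  | next (f : ℕ)
deriving DecidableEq

mutual
/-- ALCOSCC(D) concepts. -/
inductive Concept (D : ConcreteDomain) : Type where
  | atom (A : ℕ)
  | nominal (a : ℕ)
  | neg (C : Concept D)
  | conj (C₁ C₂ : Concept D)
  /-- concrete-domain restriction `∃ p₁,…,p_k. P` -/
  | cdr (P : D.Pred) (paths : Fin (D.arity P) → Path)
  /-- successor restriction `succ(con)` -/
  | succr (con : QCon D)

/-- QFBAPA set terms whose set variables are role names, concepts and feature roles. -/
inductive SetTerm (D : ConcreteDomain) : Type where
  | role (r : ℕ)
  | concept (C : Concept D)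
  /-- feature role `P(α₁,…,α_k)` -/
  | frole (P : D.Pred) (args : Fin (D.arity P) → FPtr)
  | empty
  | univ
  | inter (s t : SetTerm D)
  | union (s t : SetTerm D)
  | compl (s : SetTerm D)

/-- Presburger-arithmetic expressions `n₀ + n₁·|s₁| + ⋯ + n_k·|s_k|`. -/
inductive LinExpr (D : ConcreteDomain) : Type where
  | const (n : ℕ)
  | add (l₁ l₂ : LinExpr D)
  /-- `n · |s|` -/
  | card (n : ℕ) (s : SetTerm D)

/-- QFBAPA set and numerical constraints. -/
inductive QCon (D : ConcreteDomain) : Type where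
  | subset (s t : SetTerm D)
  | seteq (s t : SetTerm D)
  | numeq (l₁ l₂ : LinExpr D)
  | numlt (l₁ l₂ : LinExpr D)
  | dvd (n : ℕ) (l : LinExpr D)
  | not (c : QCon D)
  | and (c₁ c₂ : QCon D)
  | or (c₁ c₂ : QCon D)
end

/-- A TBox: a finite set (list) of concept inclusions `C ⊑ D`. -/
abbrev TBox (D : ConcreteDomain) := List (Concept D × Concept D)

/-! ## Semantics -/

/-- An interpretation. -/
structure Interp (D : ConcreteDomain) : Type 1 where
  Δ : Type
  delta_nonempty : Nonempty Δ
  conc : ℕ → Set Δ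
  role : ℕ → Δ → Δ → Prop
  indiv : ℕ → Δ
  feat : ℕ → Δ → Option D.Dom

/-- The set of all role successors of `d` (over all role names). -/
def Interp.succs (I : Interp D) (d : I.Δ) : Set I.Δ := { e | ∃ r, I.role r d e }

/-- Finitely branching interpretations. -/
def FinBranching (I : Interp D) : Prop := ∀ d, (I.succs d).Finite

/-- The set of values of a feature path at `d`. -/
def pathVal (I : Interp D) (d : I.Δ) : Path → Set D.Dom
  | .feat f => { c | I.feat f d = some c }
  | .rfeat r f => { c | ∃ e, I.role r d e ∧ I.feat f e = some c }

def fptrVal (I : Interp D) (d e : I.Δ) : FPtr → Option D.Dom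
  | .here f => I.feat f d
  | .next f => I.feat f e

/-- `(d,e)` belongs to the feature role `P(α₁,…,α_k)`. -/
def froleHolds (I : Interp D) (P : D.Pred) (args : Fin (D.arity P) → FPtr)
    (d e : I.Δ) : Prop :=
  ∃ vals : Fin (D.arity P) → D.Dom,
    (∀ i, fptrVal I d e (args i) = some (vals i)) ∧ D.interp P vals

mutual
/-- Semantics of concepts. -/
noncomputable def csem (I : Interp D) : Concept D → Set I.Δ
  | .atom A => I.conc A
  | .nominal a => {I.indiv a}
  | .neg C => (csem I C)ᶜ
  | .conj C₁ C₂ => csem I C₁ ∩ csem I C₂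
  | .cdr P paths => { d | ∃ vals : Fin (D.arity P) → D.Dom,
      (∀ i, vals i ∈ pathVal I d (paths i)) ∧ D.interp P vals }
  | .succr con => { d | qsat I d con }

/-- Semantics of set terms, relative to the element `d` (whose role successors form `𝒰`). -/
noncomputable def ssem (I : Interp D) (d : I.Δ) : SetTerm D → Set I.Δ
  | .role r => { e | I.role r d e }
  | .concept C => csem I C ∩ I.succs d
  | .frole P args => { e ∈ I.succs d | froleHolds I P args d e }
  | .empty => ∅
  | .univ => I.succs d
  | .inter s t => ssem I d s ∩ ssem I d t
  | .union s t => ssem I d s ∪ ssem I d t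
  | .compl s => I.succs d \ ssem I d s

/-- Value of a PA expression at `d`. -/
noncomputable def lsem (I : Interp D) (d : I.Δ) : LinExpr D → ℕ
  | .const n => n
  | .add l₁ l₂ => lsem I d l₁ + lsem I d l₂
  | .card n s => n * (ssem I d s).ncard

/-- Satisfaction of a QFBAPA constraint by the assignment induced by `d`. -/
noncomputable def qsat (I : Interp D) (d : I.Δ) : QCon D → Prop
  | .subset s t => ssem I d s ⊆ ssem I d t
  | .seteq s t => ssem I d s = ssem I d t
  | .numeq l₁ l₂ => lsem I d l₁ = lsem I d l₂
  | .numlt l₁ l₂ => lsem I d l₁ < lsem I d l₂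
  | .dvd n l => n ∣ lsem I d l
  | .not c => ¬ qsat I d c
  | .and c₁ c₂ => qsat I d c₁ ∧ qsat I d c₂
  | .or c₁ c₂ => qsat I d c₁ ∨ qsat I d c₂
end

/-- `I` is a (finitely branching) model of the TBox `T`. -/
def IsModel (I : Interp D) (T : TBox D) : Prop :=
  FinBranching I ∧ ∀ ci ∈ T, csem I ci.1 ⊆ csem I ci.2

/-- Consistency: existence of a finitely branching model. -/
def Consistent (T : TBox D) : Prop := ∃ I : Interp D, IsModel I T

/-! ## Effective encodings -/

/-- An injective encoding of lists of naturals. -/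
def encL : List ℕ → ℕ
  | [] => 0
  | a :: l => Nat.pair a (encL l) + 1

def encPath : Path → ℕ
  | .feat f => Nat.pair 0 f
  | .rfeat r f => Nat.pair 1 (Nat.pair r f)

def encFPtr : FPtr → ℕ
  | .here f => 2 * f
  | .next f => 2 * f + 1

mutual
/-- Encoding of concepts, relative to an encoding `ep` of the predicates of `D`. -/
def encC (ep : D.Pred → ℕ) : Concept D → ℕ
  | .atom A => 7 * Nat.pair 0 A
  | .nominal a => 7 * Nat.pair 1 a
  | .neg C => 7 * Nat.pair 2 (encC ep C)
  | .conj C₁ C₂ => 7 * Nat.pair 3 (Nat.pair (encC ep C₁) (encC ep C₂))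
  | .cdr P paths => 7 * Nat.pair 4 (Nat.pair (ep P) (encL (List.ofFn fun i => encPath (paths i))))
  | .succr con => 7 * Nat.pair 5 (encQ ep con)

def encS (ep : D.Pred → ℕ) : SetTerm D → ℕ
  | .role r => 8 * Nat.pair 0 r
  | .concept C => 8 * Nat.pair 1 (encC ep C)
  | .frole P args => 8 * Nat.pair 2 (Nat.pair (ep P) (encL (List.ofFn fun i => encFPtr (args i))))
  | .empty => 8 * Nat.pair 3 0
  | .univ => 8 * Nat.pair 4 0
  | .inter s t => 8 * Nat.pair 5 (Nat.pair (encS ep s) (encS ep t))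
  | .union s t => 8 * Nat.pair 6 (Nat.pair (encS ep s) (encS ep t))
  | .compl s => 8 * Nat.pair 7 (encS ep s)

def encLE (ep : D.Pred → ℕ) : LinExpr D → ℕ
  | .const n => 3 * Nat.pair 0 n
  | .add l₁ l₂ => 3 * Nat.pair 1 (Nat.pair (encLE ep l₁) (encLE ep l₂))
  | .card n s => 3 * Nat.pair 2 (Nat.pair n (encS ep s))

def encQ (ep : D.Pred → ℕ) : QCon D → ℕ
  | .subset s t => 8 * Nat.pair 0 (Nat.pair (encS ep s) (encS ep t))
  | .seteq s t => 8 * Nat.pair 1 (Nat.pair (encS ep s) (encS ep t))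
  | .numeq l₁ l₂ => 8 * Nat.pair 2 (Nat.pair (encLE ep l₁) (encLE ep l₂))
  | .numlt l₁ l₂ => 8 * Nat.pair 3 (Nat.pair (encLE ep l₁) (encLE ep l₂))
  | .dvd n l => 8 * Nat.pair 4 (Nat.pair n (encLE ep l))
  | .not c => 8 * Nat.pair 5 (encQ ep c)
  | .and c₁ c₂ => 8 * Nat.pair 6 (Nat.pair (encQ ep c₁) (encQ ep c₂))
  | .or c₁ c₂ => 8 * Nat.pair 7 (Nat.pair (encQ ep c₁) (encQ ep c₂))
end

/-- Encoding of TBoxes. -/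
def encTBox (ep : D.Pred → ℕ) (T : TBox D) : ℕ :=
  encL (T.map fun ci => Nat.pair (encC ep ci.1) (encC ep ci.2))

/-- Encoding of a single constraint with variables from ℕ. -/
def encCstr (ep : D.Pred → ℕ) (c : Cstr D ℕ) : ℕ :=
  Nat.pair (ep c.P) (encL (List.ofFn c.args))

/-- Encoding of a finite constraint system (given as a list). -/
def encFCS (ep : D.Pred → ℕ) (S : List (Cstr D ℕ)) : ℕ := encL (S.map (encCstr ep))

/-- Satisfiability of a finite constraint system given as a list. -/
def fcsSat (S : List (Cstr D ℕ)) : Prop := ∃ h : ℕ → D.Dom, ∀ c ∈ S, cstrHolds h c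

/-- Decidability of CSP(D), relative to the predicate encoding `ep`. -/
def CSPDecidable (D : ConcreteDomain) (ep : D.Pred → ℕ) : Prop :=
  ∃ g : ℕ → Bool, Computable g ∧ ∀ S : List (Cstr D ℕ), (g (encFCS ep S) = true ↔ fcsSat S)



/-! ## Statement 1 -/

mutual
/-- The concept contains no feature role (as a set variable of a successor restriction). -/
def Concept.NoFRole {D : ConcreteDomain} : Concept D → Prop
  | .atom _ => True
  | .nominal _ => True
  | .neg C => C.NoFRole
  | .conj C₁ C₂ => C₁.NoFRole ∧ C₂.NoFRole
  | .cdr _ _ => True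
  | .succr con => con.NoFRole

def SetTerm.NoFRole {D : ConcreteDomain} : SetTerm D → Prop
  | .role _ => True
  | .concept C => C.NoFRole
  | .frole _ _ => False
  | .empty => True
  | .univ => True
  | .inter s t => s.NoFRole ∧ t.NoFRole
  | .union s t => s.NoFRole ∧ t.NoFRole
  | .compl s => s.NoFRole

def LinExpr.NoFRole {D : ConcreteDomain} : LinExpr D → Prop
  | .const _ => True
  | .add l₁ l₂ => l₁.NoFRole ∧ l₂.NoFRole
  | .card _ s => s.NoFRole

def QCon.NoFRole {D : ConcreteDomain} : QCon D → Prop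
  | .subset s t => s.NoFRole ∧ t.NoFRole
  | .seteq s t => s.NoFRole ∧ t.NoFRole
  | .numeq l₁ l₂ => l₁.NoFRole ∧ l₂.NoFRole
  | .numlt l₁ l₂ => l₁.NoFRole ∧ l₂.NoFRole
  | .dvd _ l => l.NoFRole
  | .not c => c.NoFRole
  | .and c₁ c₂ => c₁.NoFRole ∧ c₂.NoFRole
  | .or c₁ c₂ => c₁.NoFRole ∧ c₂.NoFRole
end

/-- The concrete domain `𝔔 = (ℚ, <, =, >)`; predicate `0` is `<`, `1` is `=`, `2` is `>`. -/
def QD : ConcreteDomain where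
  Dom := ℚ
  dom_nonempty := ⟨0⟩
  Pred := Fin 3
  arity := fun _ => 2
  interp := fun P t => ![t 0 < t 1, t 0 = t 1, t 0 > t 1] P

/-- The role name `child`. -/
def child : ℕ := 0
/-- The feature name `salary`. -/
def salary : ℕ := 0

/-- The feature role `(salary < ↗salary)`. -/
def ltSalary : SetTerm QD := SetTerm.frole (0 : Fin 3) ![FPtr.here salary, FPtr.next salary]

/-- `C_ex = succ(|child ∩ (salary < ↗salary)| > |child ∩ (salary < ↗salary)ᶜ|)`. -/
def Cex : Concept QD :=
  Concept.succr (QCon.numlt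
    (LinExpr.card 1 (SetTerm.inter (SetTerm.role child) (SetTerm.compl ltSalary)))
    (LinExpr.card 1 (SetTerm.inter (SetTerm.role child) ltSalary)))

/-! ### Auxiliary development for Statement 1 -/

/-- The domain of the counterexample interpretation. -/
inductive El where
  | d0 | d1 | a0 | a1 | a2 | b0 | b1 | b2 | w
deriving DecidableEq

instance : Fintype El :=
  ⟨{.d0, .d1, .a0, .a1, .a2, .b0, .b1, .b2, .w}, fun x => by cases x <;> simp⟩

/-- Salaries. -/
def sal : El → Option ℚ
  | .d0 => some 0
  | .d1 => some 0
  | .a0 => some (-1)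
  | .a1 => some 1
  | .a2 => some 2
  | .b0 => some (-2)
  | .b1 => some (-1)
  | .b2 => some 1
  | .w => none

def isA (e : El) : Prop := e = .a0 ∨ e = .a1 ∨ e = .a2
def isB (e : El) : Prop := e = .b0 ∨ e = .b1 ∨ e = .b2
def Leaf (e : El) : Prop := isA e ∨ isB e

attribute [reducible] QD

/-- The counterexample interpretation. -/
abbrev M : Interp QD where
  Δ := El
  delta_nonempty := ⟨.w⟩
  conc := fun _ => ∅
  role := fun r x y => r = 0 ∧ ((x = .d0 ∧ isA y) ∨ (x = .d1 ∧ isB y))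
  indiv := fun _ => .w
  feat := fun f x => if f = 0 then sal x else none

lemma succs_d0 : M.succs El.d0 = {e | isA e} := by
  ext e; simp [Interp.succs, M]

lemma succs_d1 : M.succs El.d1 = {e | isB e} := by
  ext e; simp [Interp.succs, M]

lemma leaf_no_succ {x : El} (hx : Leaf x) : M.succs x = ∅ := by
  rcases hx with h | h <;> rcases h with rfl | rfl | rfl <;>
    · ext e; simp [Interp.succs, M]

lemma leaf_sal {x : El} (hx : Leaf x) : ∃ q : ℚ, sal x = some q := by
  rcases hx with h | h <;> rcases h with rfl | rfl | rfl <;> exact ⟨_, rfl⟩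

lemma leaf_ne_w {x : El} (hx : Leaf x) : x ≠ El.w := by
  rcases hx with h | h <;> rcases h with rfl | rfl | rfl <;> simp

lemma a0_leaf : Leaf El.a0 := Or.inl (Or.inl rfl)

lemma mem_succs_d0 {e : El} (he : e ∈ M.succs El.d0) : Leaf e := by
  rw [succs_d0] at he; exact Or.inl he

lemma mem_succs_d1 {e : El} (he : e ∈ M.succs El.d1) : Leaf e := by
  rw [succs_d1] at he; exact Or.inr he
theorem ssem_subset {I : Interp QD} {d : I.Δ} : ∀ s : SetTerm QD, ssem I d s ⊆ I.succs d
  | .role r => by intro e he; rw [ssem] at he; exact ⟨r, he⟩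
  | .concept C => by intro e he; rw [ssem] at he; exact he.2
  | .frole P args => by intro e he; rw [ssem] at he; exact he.1
  | .empty => by rw [ssem]; exact Set.empty_subset _
  | .univ => by rw [ssem]
  | .inter s t => by
      intro e he; rw [ssem] at he; exact ssem_subset s he.1
  | .union s t => by
      intro e he; rw [ssem] at he
      exact he.elim (fun h => ssem_subset s h) (fun h => ssem_subset t h)
  | .compl s => by intro e he; rw [ssem] at he; exact he.1

lemma ssem_of_no_succ {x : El} (hx : M.succs x = ∅) (s : SetTerm QD) :
    ssem M x s = ∅ :=
  Set.subset_empty_iff.mp (hx ▸ ssem_subset s)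

theorem lsem_no_succ_eq {x y : El} (hx : M.succs x = ∅) (hy : M.succs y = ∅) :
    ∀ l : LinExpr QD, lsem M x l = lsem M y l
  | .const n => by rw [lsem, lsem]
  | .add l₁ l₂ => by
      rw [lsem, lsem, lsem_no_succ_eq hx hy l₁, lsem_no_succ_eq hx hy l₂]
  | .card n s => by rw [lsem, lsem, ssem_of_no_succ hx, ssem_of_no_succ hy]

theorem qsat_no_succ_eq {x y : El} (hx : M.succs x = ∅) (hy : M.succs y = ∅) :
    ∀ c : QCon QD, qsat M x c ↔ qsat M y c
  | .subset s t => by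
      rw [qsat, qsat, ssem_of_no_succ hx, ssem_of_no_succ hx,
        ssem_of_no_succ hy, ssem_of_no_succ hy]
  | .seteq s t => by
      rw [qsat, qsat, ssem_of_no_succ hx, ssem_of_no_succ hx,
        ssem_of_no_succ hy, ssem_of_no_succ hy]
  | .numeq l₁ l₂ => by
      rw [qsat, qsat, lsem_no_succ_eq hx hy l₁, lsem_no_succ_eq hx hy l₂]
  | .numlt l₁ l₂ => by
      rw [qsat, qsat, lsem_no_succ_eq hx hy l₁, lsem_no_succ_eq hx hy l₂]
  | .dvd n l => by rw [qsat, qsat, lsem_no_succ_eq hx hy l]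
  | .not c => by rw [qsat, qsat]; exact not_congr (qsat_no_succ_eq hx hy c)
  | .and c₁ c₂ => by
      rw [qsat, qsat]
      exact and_congr (qsat_no_succ_eq hx hy c₁) (qsat_no_succ_eq hx hy c₂)
  | .or c₁ c₂ => by
      rw [qsat, qsat]
      exact or_congr (qsat_no_succ_eq hx hy c₁) (qsat_no_succ_eq hx hy c₂)
lemma csem_cdr_mem (x : El) (P : Fin 3) (paths : Fin 2 → Path) :
    x ∈ csem M (.cdr P paths) ↔
      ∃ v0 ∈ pathVal M x (paths 0), ∃ v1 ∈ pathVal M x (paths 1),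
        QD.interp P ![v0, v1] := by
  rw [csem]
  show (∃ vals : Fin 2 → ℚ, (∀ i : Fin 2, vals i ∈ pathVal M x (paths i)) ∧
    QD.interp P vals) ↔ _
  constructor
  · rintro ⟨vals, h1, h2⟩
    refine ⟨vals 0, h1 0, vals 1, h1 1, ?_⟩
    have hv : vals = ![vals 0, vals 1] := by
      funext i; fin_cases i <;> simp
    rw [← hv]; exact h2
  · rintro ⟨v0, h0, v1, h1, h⟩
    refine ⟨![v0, v1], fun i => ?_, h⟩
    fin_cases i <;> simpa

lemma cdr_leaf {x : El} (hx : Leaf x) (P : Fin 3) (paths : Fin 2 → Path) :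
    x ∈ csem M (.cdr P paths) ↔
      (P = 1 ∧ paths 0 = .feat 0 ∧ paths 1 = .feat 0) := by
  obtain ⟨q, hq⟩ := leaf_sal hx
  have hns := leaf_no_succ hx
  rw [csem_cdr_mem]
  have hpv : ∀ p : Path, ∀ v : ℚ, v ∈ pathVal M x p → p = .feat 0 ∧ v = q := by
    intro p v hv
    cases p with
    | feat f =>
        simp only [pathVal, Set.mem_setOf_eq] at hv
        by_cases hf : f = 0
        · subst hf
          have : sal x = some v := by simpa [M] using hv
          rw [hq] at this
          exact ⟨rfl, (Option.some_injective _ this).symm⟩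
        · exfalso; simp [M, hf] at hv
    | rfeat r f =>
        exfalso
        simp only [pathVal, Set.mem_setOf_eq] at hv
        obtain ⟨e, he, -⟩ := hv
        have : e ∈ M.succs x := ⟨r, he⟩
        rw [hns] at this; exact this
  constructor
  · rintro ⟨v0, h0, v1, h1, h⟩
    obtain ⟨hp0, rfl⟩ := hpv _ _ h0
    obtain ⟨hp1, hv1⟩ := hpv _ _ h1
    refine ⟨?_, hp0, hp1⟩
    subst hv1
    fin_cases P <;> simp [QD] at h ⊢
  · rintro ⟨rfl, hp0, hp1⟩
    refine ⟨q, ?_, q, ?_, ?_⟩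
    · rw [hp0]; simp [pathVal, M, hq]
    · rw [hp1]; simp [pathVal, M, hq]
    · simp [QD]

theorem leaf_csem_eq {x y : El} (hx : Leaf x) (hy : Leaf y) :
    ∀ C : Concept QD, C.NoFRole → (x ∈ csem M C ↔ y ∈ csem M C)
  | .atom A, _ => by rw [csem]; simp [M]
  | .nominal a, _ => by
      rw [csem]
      simp only [Set.mem_singleton_iff]
      constructor <;> intro h
      · exact absurd h (by exact leaf_ne_w hx)
      · exact absurd h (by exact leaf_ne_w hy)
  | .neg C, h => by
      rw [csem]
      simp only [Set.mem_compl_iff]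
      exact not_congr (leaf_csem_eq hx hy C (by simpa [Concept.NoFRole] using h))
  | .conj C₁ C₂, h => by
      rw [csem]
      simp only [Set.mem_inter_iff]
      rw [Concept.NoFRole] at h
      exact and_congr (leaf_csem_eq hx hy C₁ h.1) (leaf_csem_eq hx hy C₂ h.2)
  | .cdr P paths, _ => by rw [cdr_leaf hx, cdr_leaf hy]
  | .succr con, _ => by
      rw [csem]
      exact qsat_no_succ_eq (leaf_no_succ hx) (leaf_no_succ hy) con
theorem ssem_dich : ∀ s : SetTerm QD, s.NoFRole →
    (ssem M El.d0 s = ∅ ∧ ssem M El.d1 s = ∅) ∨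
    (ssem M El.d0 s = M.succs El.d0 ∧ ssem M El.d1 s = M.succs El.d1)
  | .role r, _ => by
      by_cases hr : r = 0
      · subst hr
        right
        constructor <;> rw [ssem] <;> ext e <;>
          simp [Interp.succs, M]
      · left
        constructor <;> rw [ssem] <;> ext e <;> simp [M, hr]
  | .concept C, h => by
      rw [SetTerm.NoFRole] at h
      by_cases hm : El.a0 ∈ csem M C
      · right
        constructor <;> rw [ssem]
        · refine Set.inter_eq_right.mpr fun e he => ?_
          exact (leaf_csem_eq (mem_succs_d0 he) a0_leaf C h).mpr hm
        · refine Set.inter_eq_right.mpr fun e he => ?_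
          exact (leaf_csem_eq (mem_succs_d1 he) a0_leaf C h).mpr hm
      · left
        constructor <;> rw [ssem] <;>
          refine Set.eq_empty_of_forall_notMem fun e he => hm ?_
        · exact (leaf_csem_eq (mem_succs_d0 he.2) a0_leaf C h).mp he.1
        · exact (leaf_csem_eq (mem_succs_d1 he.2) a0_leaf C h).mp he.1
  | .frole P args, h => by rw [SetTerm.NoFRole] at h; exact absurd h (by simp)
  | .empty, _ => by left; rw [ssem, ssem]; exact ⟨rfl, rfl⟩
  | .univ, _ => by right; rw [ssem, ssem]; exact ⟨rfl, rfl⟩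
  | .inter s t, h => by
      rw [SetTerm.NoFRole] at h
      rw [ssem, ssem]
      rcases ssem_dich s h.1 with ⟨hs0, hs1⟩ | ⟨hs0, hs1⟩ <;>
        rcases ssem_dich t h.2 with ⟨ht0, ht1⟩ | ⟨ht0, ht1⟩ <;>
        rw [hs0, hs1, ht0, ht1] <;> simp
  | .union s t, h => by
      rw [SetTerm.NoFRole] at h
      rw [ssem, ssem]
      rcases ssem_dich s h.1 with ⟨hs0, hs1⟩ | ⟨hs0, hs1⟩ <;>
        rcases ssem_dich t h.2 with ⟨ht0, ht1⟩ | ⟨ht0, ht1⟩ <;>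
        rw [hs0, hs1, ht0, ht1] <;> simp
  | .compl s, h => by
      rw [SetTerm.NoFRole] at h
      rw [ssem, ssem]
      rcases ssem_dich s h with ⟨hs0, hs1⟩ | ⟨hs0, hs1⟩ <;>
        rw [hs0, hs1] <;> simp

lemma ncard_succs_d0 : (M.succs El.d0).ncard = 3 := by
  have : M.succs El.d0 = {El.a0, El.a1, El.a2} := by
    rw [succs_d0]; ext e; simp [isA]
  rw [this, Set.ncard_insert_of_notMem (by simp),
    Set.ncard_insert_of_notMem (by simp), Set.ncard_singleton]

lemma ncard_succs_d1 : (M.succs El.d1).ncard = 3 := by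
  have : M.succs El.d1 = {El.b0, El.b1, El.b2} := by
    rw [succs_d1]; ext e; simp [isB]
  rw [this, Set.ncard_insert_of_notMem (by simp),
    Set.ncard_insert_of_notMem (by simp), Set.ncard_singleton]

theorem lsem_d0_d1 : ∀ l : LinExpr QD, l.NoFRole →
    lsem M El.d0 l = lsem M El.d1 l
  | .const n, _ => by rw [lsem, lsem]
  | .add l₁ l₂, h => by
      rw [LinExpr.NoFRole] at h
      rw [lsem, lsem, lsem_d0_d1 l₁ h.1, lsem_d0_d1 l₂ h.2]
  | .card n s, h => by
      rw [LinExpr.NoFRole] at h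
      rw [lsem, lsem]
      rcases ssem_dich s h with ⟨hs0, hs1⟩ | ⟨hs0, hs1⟩
      · rw [hs0, hs1]
      · rw [hs0, hs1, ncard_succs_d0, ncard_succs_d1]

lemma a0_mem_succs_d0 : El.a0 ∈ M.succs El.d0 := by rw [succs_d0]; exact Or.inl rfl
lemma b0_mem_succs_d1 : El.b0 ∈ M.succs El.d1 := by rw [succs_d1]; exact Or.inl rfl

theorem qsat_d0_d1 : ∀ c : QCon QD, c.NoFRole →
    (qsat M El.d0 c ↔ qsat M El.d1 c)
  | .subset s t, h => by
      rw [QCon.NoFRole] at h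
      rw [qsat, qsat]
      rcases ssem_dich s h.1 with ⟨hs0, hs1⟩ | ⟨hs0, hs1⟩ <;>
        rcases ssem_dich t h.2 with ⟨ht0, ht1⟩ | ⟨ht0, ht1⟩ <;>
        rw [hs0, hs1, ht0, ht1] <;> simp
      constructor <;> intro hsub <;> exfalso
      · exact (hsub ▸ a0_mem_succs_d0 : El.a0 ∈ (∅ : Set El))
      · exact (hsub ▸ b0_mem_succs_d1 : El.b0 ∈ (∅ : Set El))
  | .seteq s t, h => by
      rw [QCon.NoFRole] at h
      rw [qsat, qsat]
      have hne0 : M.succs El.d0 ≠ ∅ :=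
        Set.nonempty_iff_ne_empty.mp ⟨_, a0_mem_succs_d0⟩
      have hne1 : M.succs El.d1 ≠ ∅ :=
        Set.nonempty_iff_ne_empty.mp ⟨_, b0_mem_succs_d1⟩
      rcases ssem_dich s h.1 with ⟨hs0, hs1⟩ | ⟨hs0, hs1⟩ <;>
        rcases ssem_dich t h.2 with ⟨ht0, ht1⟩ | ⟨ht0, ht1⟩ <;>
        rw [hs0, hs1, ht0, ht1]
      case inl.inr =>
        exact iff_of_false (fun hh => hne0 hh.symm) (fun hh => hne1 hh.symm)
      case inr.inl => exact iff_of_false hne0 hne1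
      case inr.inr => exact iff_of_true rfl rfl
  | .numeq l₁ l₂, h => by
      rw [QCon.NoFRole] at h
      rw [qsat, qsat, lsem_d0_d1 l₁ h.1, lsem_d0_d1 l₂ h.2]
  | .numlt l₁ l₂, h => by
      rw [QCon.NoFRole] at h
      rw [qsat, qsat, lsem_d0_d1 l₁ h.1, lsem_d0_d1 l₂ h.2]
  | .dvd n l, h => by
      rw [QCon.NoFRole] at h
      rw [qsat, qsat, lsem_d0_d1 l h]
  | .not c, h => by
      rw [QCon.NoFRole] at h
      rw [qsat, qsat]
      exact not_congr (qsat_d0_d1 c h)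
  | .and c₁ c₂, h => by
      rw [QCon.NoFRole] at h
      rw [qsat, qsat]
      exact and_congr (qsat_d0_d1 c₁ h.1) (qsat_d0_d1 c₂ h.2)
  | .or c₁ c₂, h => by
      rw [QCon.NoFRole] at h
      rw [qsat, qsat]
      exact or_congr (qsat_d0_d1 c₁ h.1) (qsat_d0_d1 c₂ h.2)
lemma pv_pair (p : Path) :
    (pathVal M El.d0 p = ∅ ∧ pathVal M El.d1 p = ∅) ∨
    (pathVal M El.d0 p = {(0 : ℚ)} ∧ pathVal M El.d1 p = {(0 : ℚ)}) ∨
    (pathVal M El.d0 p = ({-1, 1, 2} : Set ℚ) ∧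
      pathVal M El.d1 p = ({-2, -1, 1} : Set ℚ)) := by
  cases p with
  | feat f =>
      by_cases hf : f = 0
      · subst hf
        right; left
        constructor <;> · ext c; simp [pathVal, M, sal, eq_comm]
      · left
        constructor <;> · ext c; simp [pathVal, M, hf]
  | rfeat r f =>
      by_cases hr : r = 0
      · subst hr
        by_cases hf : f = 0
        · subst hf
          right; right
          constructor <;> · ext c; simp [pathVal, M, isA, isB, sal, eq_comm]
        · left
          constructor <;> · ext c; simp [pathVal, M, hf]
      · left
        constructor <;> · ext c; simp [pathVal, M, hr]

lemma cdr_d0_d1 (P : Fin 3) (paths : Fin 2 → Path) :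
    (El.d0 ∈ csem M (.cdr P paths)) ↔ (El.d1 ∈ csem M (.cdr P paths)) := by
  rw [csem_cdr_mem, csem_cdr_mem]
  rcases pv_pair (paths 0) with ⟨h0, h0'⟩ | ⟨h0, h0'⟩ | ⟨h0, h0'⟩ <;>
    rcases pv_pair (paths 1) with ⟨h1, h1'⟩ | ⟨h1, h1'⟩ | ⟨h1, h1'⟩ <;>
    rw [h0, h0', h1, h1'] <;>
    fin_cases P <;>
    simp only [QD, Set.mem_empty_iff_false, Set.mem_singleton_iff,
      Set.mem_insert_iff, Matrix.cons_val_zero, Matrix.cons_val_one,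
      Matrix.head_cons, Fin.mk_zero, Fin.mk_one, Matrix.cons_val_two,
      Matrix.tail_cons, false_and, exists_false, exists_eq_left,
      exists_prop] <;>
    norm_num
theorem csem_d0_d1 : ∀ C : Concept QD, C.NoFRole →
    (El.d0 ∈ csem M C ↔ El.d1 ∈ csem M C)
  | .atom A, _ => by rw [csem]; simp [M]
  | .nominal a, _ => by rw [csem]; simp [M]
  | .neg C, h => by
      rw [csem]
      simp only [Set.mem_compl_iff]
      exact not_congr (csem_d0_d1 C (by simpa [Concept.NoFRole] using h))
  | .conj C₁ C₂, h => by
      rw [csem]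
      simp only [Set.mem_inter_iff]
      rw [Concept.NoFRole] at h
      exact and_congr (csem_d0_d1 C₁ h.1) (csem_d0_d1 C₂ h.2)
  | .cdr P paths, _ => cdr_d0_d1 P paths
  | .succr con, h => by
      rw [csem]
      rw [Concept.NoFRole] at h
      exact qsat_d0_d1 con h

lemma froleHolds_iff (d e : El) (v w : ℚ) (hd : sal d = some v)
    (he : sal e = some w) :
    froleHolds M (0 : Fin 3) ![FPtr.here salary, FPtr.next salary] d e ↔ v < w := by
  show (∃ vals : Fin 2 → ℚ,
      (∀ i : Fin 2, fptrVal M d e (![FPtr.here salary, FPtr.next salary] i) = some (vals i)) ∧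
      QD.interp (0 : Fin 3) vals) ↔ v < w
  constructor
  · rintro ⟨vals, h1, h2⟩
    have h0 := h1 0
    have h1' := h1 1
    simp [fptrVal, M, salary, hd, he] at h0 h1'
    have hv : vals = ![v, w] := by
      funext i
      fin_cases i
      · simpa using h0.symm
      · simpa using h1'.symm
    rw [hv] at h2
    simpa [QD] using h2
  · intro hvw
    refine ⟨![v, w], fun i => ?_, by simpa [QD] using hvw⟩
    fin_cases i <;> simp [fptrVal, M, salary, hd, he]

lemma ssem_pos_d0 :
    ssem M El.d0 (SetTerm.inter (SetTerm.role child) ltSalary) =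
      ({El.a1, El.a2} : Set El) := by
  simp only [ltSalary, child, ssem]
  ext e
  constructor
  · rintro ⟨hr, -, hf⟩
    obtain ⟨-, (⟨-, he⟩ | ⟨hd, -⟩)⟩ := hr
    · rcases he with rfl | rfl | rfl
      · rw [froleHolds_iff El.d0 El.a0 0 (-1) rfl rfl] at hf; norm_num at hf
      · exact Or.inl rfl
      · exact Or.inr rfl
    · exact absurd hd (by simp)
  · rintro (rfl | rfl)
    · exact ⟨⟨trivial, Or.inl ⟨trivial, Or.inr (Or.inl rfl)⟩⟩,
        ⟨0, rfl, Or.inl ⟨rfl, Or.inr (Or.inl rfl)⟩⟩,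
        (froleHolds_iff El.d0 El.a1 0 (1) rfl rfl).mpr (by norm_num)⟩
    · exact ⟨⟨trivial, Or.inl ⟨trivial, Or.inr (Or.inr rfl)⟩⟩,
        ⟨0, rfl, Or.inl ⟨rfl, Or.inr (Or.inr rfl)⟩⟩,
        (froleHolds_iff El.d0 El.a2 0 (2) rfl rfl).mpr (by norm_num)⟩

lemma ssem_pos_d1 :
    ssem M El.d1 (SetTerm.inter (SetTerm.role child) ltSalary) =
      ({El.b2} : Set El) := by
  simp only [ltSalary, child, ssem]
  ext e
  constructor
  · rintro ⟨hr, -, hf⟩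
    obtain ⟨-, (⟨hd, -⟩ | ⟨-, he⟩)⟩ := hr
    · exact absurd hd (by simp)
    · rcases he with rfl | rfl | rfl
      · rw [froleHolds_iff El.d1 El.b0 0 (-2) rfl rfl] at hf; norm_num at hf
      · rw [froleHolds_iff El.d1 El.b1 0 (-1) rfl rfl] at hf; norm_num at hf
      · rfl
  · rintro rfl
    exact ⟨⟨trivial, Or.inr ⟨trivial, Or.inr (Or.inr rfl)⟩⟩,
      ⟨0, rfl, Or.inr ⟨rfl, Or.inr (Or.inr rfl)⟩⟩,
      (froleHolds_iff El.d1 El.b2 0 (1) rfl rfl).mpr (by norm_num)⟩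

lemma ssem_neg_d0 :
    ssem M El.d0 (SetTerm.inter (SetTerm.role child) (SetTerm.compl ltSalary)) =
      ({El.a0} : Set El) := by
  simp only [ltSalary, child, ssem]
  ext e
  constructor
  · rintro ⟨hr, -, hf⟩
    obtain ⟨-, (⟨-, he⟩ | ⟨hd, -⟩)⟩ := hr
    · rcases he with rfl | rfl | rfl
      · rfl
      · exact absurd ⟨⟨0, rfl, Or.inl ⟨rfl, Or.inr (Or.inl rfl)⟩⟩,
          (froleHolds_iff El.d0 El.a1 0 (1) rfl rfl).mpr (by norm_num)⟩ hf
      · exact absurd ⟨⟨0, rfl, Or.inl ⟨rfl, Or.inr (Or.inr rfl)⟩⟩,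
          (froleHolds_iff El.d0 El.a2 0 (2) rfl rfl).mpr (by norm_num)⟩ hf
    · exact absurd hd (by simp)
  · rintro rfl
    refine ⟨⟨trivial, Or.inl ⟨trivial, Or.inl rfl⟩⟩,
      ⟨0, rfl, Or.inl ⟨rfl, Or.inl rfl⟩⟩, fun hh => ?_⟩
    obtain ⟨-, hfr⟩ := hh
    rw [froleHolds_iff El.d0 El.a0 0 (-1) rfl rfl] at hfr
    norm_num at hfr

lemma ssem_neg_d1 :
    ssem M El.d1 (SetTerm.inter (SetTerm.role child) (SetTerm.compl ltSalary)) =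
      ({El.b0, El.b1} : Set El) := by
  simp only [ltSalary, child, ssem]
  ext e
  constructor
  · rintro ⟨hr, -, hf⟩
    obtain ⟨-, (⟨hd, -⟩ | ⟨-, he⟩)⟩ := hr
    · exact absurd hd (by simp)
    · rcases he with rfl | rfl | rfl
      · exact Or.inl rfl
      · exact Or.inr rfl
      · exact absurd ⟨⟨0, rfl, Or.inr ⟨rfl, Or.inr (Or.inr rfl)⟩⟩,
          (froleHolds_iff El.d1 El.b2 0 (1) rfl rfl).mpr (by norm_num)⟩ hf
  · rintro (rfl | rfl)
    · refine ⟨⟨trivial, Or.inr ⟨trivial, Or.inl rfl⟩⟩,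
        ⟨0, rfl, Or.inr ⟨rfl, Or.inl rfl⟩⟩, fun hh => ?_⟩
      obtain ⟨-, hfr⟩ := hh
      rw [froleHolds_iff El.d1 El.b0 0 (-2) rfl rfl] at hfr
      norm_num at hfr
    · refine ⟨⟨trivial, Or.inr ⟨trivial, Or.inr (Or.inl rfl)⟩⟩,
        ⟨0, rfl, Or.inr ⟨rfl, Or.inr (Or.inl rfl)⟩⟩, fun hh => ?_⟩
      obtain ⟨-, hfr⟩ := hh
      rw [froleHolds_iff El.d1 El.b1 0 (-1) rfl rfl] at hfr
      norm_num at hfr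
lemma d0_mem_Cex : El.d0 ∈ csem M Cex := by
  rw [Cex, csem]
  show qsat M El.d0 _
  rw [qsat, lsem, lsem, ssem_neg_d0, ssem_pos_d0,
    Set.ncard_singleton, Set.ncard_pair (by simp)]
  norm_num

lemma d1_not_mem_Cex : El.d1 ∉ csem M Cex := by
  rw [Cex, csem]
  show ¬ qsat M El.d1 _
  rw [qsat, lsem, lsem, ssem_neg_d1, ssem_pos_d1,
    Set.ncard_singleton, Set.ncard_pair (by simp)]
  norm_num

lemma M_finBranching : FinBranching M := by
  have : Finite M.Δ := inferInstanceAs (Finite El)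
  exact fun _ => Set.toFinite _

/-- No ALCOSCC(𝔔) concept without feature roles is equivalent to `C_ex`:
for each such concept there is a finitely branching interpretation where the two concepts
are interpreted differently. -/
theorem no_frole_free_concept_equivalent_to_Cex :
    ∀ C : Concept QD, C.NoFRole →
      ∃ I : Interp QD, FinBranching I ∧ csem I C ≠ csem I Cex := by
  intro C hC
  refine ⟨M, M_finBranching, fun h => ?_⟩
  have h0 : El.d0 ∈ csem M C := h ▸ d0_mem_Cex
  have h1 : El.d1 ∈ csem M C := (csem_d0_d1 C hC).mp h0
  exact d1_not_mem_Cex (h ▸ h1)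

end ALCOSCC
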